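/- arXiv:1112.2425 — 5 statements merged into one kernel-verified Lean document; each statement's English description precedes it below -/
import Mathlib

section
/- Let p be a prime and λ_1, ..., λ_n ∈ (0,1] real numbers with λ := λ_1 + ... + λ_n ≤ 1. If for every e ≥ 1 the e-th digits of the non-terminating base-p expansions satisfy λ_1^(e) + ... + λ_n^(e) ≤ p - 1, then for all e ≥ 1 the e-th digit of λ equals λ_1^(e) + ... + λ_n^(e). -/
/-!
Non-terminating base-`p` expansions are unique: if two digit sequences with digits `≤ p - 1`
first differ at position `e`, the one with the larger digit there wins by at least `1 / p ^ e`
from that digit, while the tail of the other contributes at most `1 / p ^ e` and the tail of the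
non-terminating one contributes strictly more than `0`. Without carrying, the digitwise sums
`∑ i, λ_i^(e)` are themselves admissible digits, they expand `λ`, and they do not terminate because
`λ > 0` forces `n ≥ 1` and the digits of `λ_1` do not; hence they are the digits of `λ`.
-/

open Finset

/-- Term `d` carries the digit `f (d + 1)` at position `d + 1`, so `f 0` never enters. -/
noncomputable def digitSeries (p : ℕ) (f : ℕ → ℕ) (d : ℕ) : ℝ :=
  f (d + 1) / (p : ℝ) ^ (d + 1)

section DigitSeries

variable {p : ℕ} {f : ℕ → ℕ}

lemma hasSum_sub_one_div_pow (hp : 1 < p) (m : ℕ) :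
    HasSum (fun d : ℕ => ((p : ℝ) - 1) / (p : ℝ) ^ (d + m + 1)) (1 / (p : ℝ) ^ m) := by
  have hp' : (1 : ℝ) < p := by exact_mod_cast hp
  have hr : (1 : ℝ) / p < 1 := by rw [div_lt_one (by linarith)]; exact hp'
  have hterm : ∀ d : ℕ, ((p : ℝ) - 1) / (p : ℝ) ^ (d + m + 1)
      = ((p : ℝ) - 1) / (p : ℝ) ^ (m + 1) * (1 / (p : ℝ)) ^ d := fun d => by
    rw [div_pow, one_pow, show d + m + 1 = d + (m + 1) by omega, pow_add]
    field_simp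
  have hvalue : ((p : ℝ) - 1) / (p : ℝ) ^ (m + 1) * (1 - 1 / (p : ℝ))⁻¹ = 1 / (p : ℝ) ^ m := by
    have : (p : ℝ) - 1 ≠ 0 := by linarith
    rw [one_sub_div (by positivity), inv_div, pow_succ]
    field_simp
  simpa only [← hterm, hvalue] using
    (hasSum_geometric_of_lt_one (by positivity) hr).mul_left (((p : ℝ) - 1) / (p : ℝ) ^ (m + 1))

lemma tsum_digitSeries_tail_le (hp : 1 < p) (hf : ∀ d, f (d + 1) ≤ p - 1)
    (hs : Summable (digitSeries p f)) (m : ℕ) :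
    ∑' d, digitSeries p f (d + m) ≤ 1 / (p : ℝ) ^ m := by
  refine hasSum_le (fun d => ?_) ((summable_nat_add_iff m).2 hs).hasSum
    (hasSum_sub_one_div_pow hp m)
  have hdigit : (f (d + m + 1) : ℝ) ≤ (p : ℝ) - 1 := by
    rw [← Nat.cast_pred (by omega)]
    exact_mod_cast hf (d + m)
  unfold digitSeries
  gcongr

lemma tsum_digitSeries_tail_pos (hp : 0 < p) (hf : ∀ N, ∃ d ≥ N, f d ≠ 0)
    (hs : Summable (digitSeries p f)) (m : ℕ) :
    0 < ∑' d, digitSeries p f (d + m) := by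
  obtain ⟨d, hd, hfd⟩ := hf (m + 1)
  refine ((summable_nat_add_iff m).2 hs).tsum_pos
    (fun _ => by unfold digitSeries; positivity) (d - m - 1) ?_
  unfold digitSeries
  rw [show d - m - 1 + m + 1 = d by omega]
  exact div_pos (by exact_mod_cast Nat.pos_of_ne_zero hfd) (by positivity)

lemma tsum_digitSeries_eq_sum_add_digit_add_tail (hs : Summable (digitSeries p f)) (m : ℕ) :
    ∑' d, digitSeries p f d =
      ∑ d ∈ range m, digitSeries p f d + digitSeries p f m + ∑' d, digitSeries p f (d + (m + 1)) := by
  rw [← sum_range_succ, hs.sum_add_tsum_nat_add]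

lemma tsum_digitSeries_lt_of_lt {b c : ℕ → ℕ} (hp : 1 < p) (hc : ∀ d, c (d + 1) ≤ p - 1)
    (hb : ∀ N, ∃ d ≥ N, b d ≠ 0) (hbs : Summable (digitSeries p b))
    (hcs : Summable (digitSeries p c)) (m : ℕ) (hagree : ∀ d < m, b (d + 1) = c (d + 1))
    (hlt : c (m + 1) < b (m + 1)) :
    ∑' d, digitSeries p c d < ∑' d, digitSeries p b d := by
  have hprefix : ∑ d ∈ range m, digitSeries p c d = ∑ d ∈ range m, digitSeries p b d :=
    sum_congr rfl fun d hd => by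
      unfold digitSeries
      rw [hagree d (mem_range.mp hd)]
  have hdigit : digitSeries p c m + 1 / (p : ℝ) ^ (m + 1) ≤ digitSeries p b m := by
    unfold digitSeries
    rw [← add_div]
    gcongr
    exact_mod_cast hlt
  rw [tsum_digitSeries_eq_sum_add_digit_add_tail hcs m,
    tsum_digitSeries_eq_sum_add_digit_add_tail hbs m, hprefix]
  linarith [tsum_digitSeries_tail_le hp hc hcs (m + 1),
    tsum_digitSeries_tail_pos (by omega) hb hbs (m + 1)]

theorem digits_eq_of_hasSum_digitSeries {b c : ℕ → ℕ} {x : ℝ} (hp : 1 < p)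
    (hb : ∀ d, b (d + 1) ≤ p - 1) (hc : ∀ d, c (d + 1) ≤ p - 1)
    (hbnt : ∀ N, ∃ d ≥ N, b d ≠ 0) (hcnt : ∀ N, ∃ d ≥ N, c d ≠ 0)
    (hbs : HasSum (digitSeries p b) x) (hcs : HasSum (digitSeries p c) x) (d : ℕ) :
    b (d + 1) = c (d + 1) := by
  induction d using Nat.strong_induction_on with
  | _ m ih =>
    rcases lt_trichotomy (b (m + 1)) (c (m + 1)) with hlt | heq | hgt
    · have := tsum_digitSeries_lt_of_lt hp hb hcnt hcs.summable hbs.summable m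
        (fun d hd => (ih d hd).symm) hlt
      rw [hbs.tsum_eq, hcs.tsum_eq] at this
      exact absurd this (lt_irrefl x)
    · exact heq
    · have := tsum_digitSeries_lt_of_lt hp hc hbnt hbs.summable hcs.summable m ih hgt
      rw [hbs.tsum_eq, hcs.tsum_eq] at this
      exact absurd this (lt_irrefl x)

end DigitSeries

theorem stmt2_general (p n : ℕ) (hp : p.Prime) (lam : Fin n → ℝ)
    (a : Fin n → ℕ → ℕ)
    (hsum : ∀ i, HasSum (fun d : ℕ => (a i (d + 1) : ℝ) / (p : ℝ) ^ (d + 1)) (lam i))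
    (hnt : ∀ i N, ∃ d ≥ N, a i d ≠ 0)
    (b : ℕ → ℕ) (hb : ∀ d, b d ≤ p - 1)
    (hbsum : HasSum (fun d : ℕ => (b (d + 1) : ℝ) / (p : ℝ) ^ (d + 1)) (∑ i, lam i))
    (hbnt : ∀ N, ∃ d ≥ N, b d ≠ 0)
    (hcarry : ∀ e, 1 ≤ e → ∑ i, a i e ≤ p - 1) :
    ∀ e, 1 ≤ e → b e = ∑ i, a i e := by
  set c : ℕ → ℕ := fun e => ∑ i, a i e
  have hcsum : HasSum (digitSeries p c) (∑ i, lam i) := by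
    convert hasSum_sum fun i _ => hsum i using 1
    funext d
    simp only [digitSeries, c, Nat.cast_sum, sum_div]
  have hpos : 0 < ∑ i, lam i := by
    simpa [digitSeries, hbsum.tsum_eq] using tsum_digitSeries_tail_pos hp.pos hbnt hbsum.summable 0
  obtain ⟨i, -, -⟩ := exists_ne_zero_of_sum_ne_zero hpos.ne'
  have hcnt : ∀ N, ∃ d ≥ N, c d ≠ 0 := fun N =>
    (hnt i N).imp fun d ⟨hdN, hd⟩ => ⟨hdN, fun h => hd (sum_eq_zero_iff.mp h i (mem_univ i))⟩
  intro e he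
  obtain ⟨d, rfl⟩ := Nat.exists_eq_add_of_le' he
  exact digits_eq_of_hasSum_digitSeries hp.one_lt (fun d => hb (d + 1))
    (fun d => hcarry (d + 1) (Nat.le_add_left 1 d)) hbnt hcnt hbsum hcsum d

/-- If `λ_1, …, λ_n ∈ (0,1]` have non-terminating base-`p` digits `a i`, their sum
`λ = ∑ λ_i ≤ 1` has digits `b`, and for every `e ≥ 1` the `e`-th digits add without
carrying (`∑ i, a i e ≤ p - 1`), then `b e = ∑ i, a i e` for all `e ≥ 1`. -/
theorem stmt2 (p n : ℕ) (hp : p.Prime) (lam : Fin n → ℝ)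
    (hlam : ∀ i, lam i ∈ Set.Ioc (0 : ℝ) 1)
    (a : Fin n → ℕ → ℕ) (ha : ∀ i d, a i d ≤ p - 1)
    (hsum : ∀ i, HasSum (fun d : ℕ => (a i (d + 1) : ℝ) / (p : ℝ) ^ (d + 1)) (lam i))
    (hnt : ∀ i N, ∃ d ≥ N, a i d ≠ 0)
    (htot : ∑ i, lam i ≤ 1)
    (b : ℕ → ℕ) (hb : ∀ d, b d ≤ p - 1)
    (hbsum : HasSum (fun d : ℕ => (b (d + 1) : ℝ) / (p : ℝ) ^ (d + 1)) (∑ i, lam i))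
    (hbnt : ∀ N, ∃ d ≥ N, b d ≠ 0)
    (hcarry : ∀ e, 1 ≤ e → ∑ i, a i e ≤ p - 1) :
    ∀ e, 1 ≤ e → b e = ∑ i, a i e :=
  stmt2_general p n hp lam a hsum hnt b hb hbsum hbnt hcarry
end

section
/- Let p be a prime and k_1, ..., k_n natural numbers with N = k_1 + ... + k_n. Then the multinomial coefficient N!/(k_1! ⋯ k_n!) is not divisible by p if and only if for every i ≥ 0 the sum of the i-th base-p digits of k_1, ..., k_n is at most p - 1 (i.e., k_1, ..., k_n add without carrying in base p). -/
/-!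
By Legendre's formula, `v_p` of the multinomial coefficient is
`∑_{j ≥ 1} (⌊N / p^j⌋ - ∑_i ⌊k_i / p^j⌋)`, a sum of nonnegative terms. The `j`-th term vanishes
exactly when the remainders `k_i mod p^j` sum to less than `p^j`, i.e. when no carry occurs out
of the lowest `j` digits; by induction on `j`, using
`∑ k_i mod p^(j+1) = ∑ k_i mod p^j + p^j · (sum of the j-th digits)`, this holds for all `j`
iff every digit sum is below `p`.
-/

open Finset

namespace Nat

variable {ι : Type*} (s : Finset ι) (f : ι → ℕ)

theorem sum_div_le_div_sum (m : ℕ) : ∑ i ∈ s, f i / m ≤ (∑ i ∈ s, f i) / m := by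
  rcases m.eq_zero_or_pos with rfl | hm
  · simp
  rw [le_div_iff_mul_le hm, sum_mul]
  exact sum_le_sum fun i _ => div_mul_le_self _ _

theorem sum_div_eq_div_sum_iff {m : ℕ} (hm : 0 < m) :
    ∑ i ∈ s, f i / m = (∑ i ∈ s, f i) / m ↔ ∑ i ∈ s, f i % m < m := by
  have hsum : ∑ i ∈ s, f i = m * ∑ i ∈ s, f i / m + ∑ i ∈ s, f i % m := by
    rw [mul_sum, ← sum_add_distrib]
    exact sum_congr rfl fun i _ => (div_add_mod _ _).symm
  rw [hsum, mul_add_div hm, left_eq_add, div_eq_zero_iff_lt hm]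

theorem padicValNat_multinomial {p b : ℕ} [Fact p.Prime] (hb : log p (∑ i ∈ s, f i) < b) :
    padicValNat p (multinomial s f) =
      ∑ j ∈ Ico 1 b, ((∑ i ∈ s, f i) / p ^ j - ∑ i ∈ s, f i / p ^ j) := by
  have hprod : padicValNat p (∏ i ∈ s, (f i)!) = ∑ j ∈ Ico 1 b, ∑ i ∈ s, f i / p ^ j := by
    rw [← factorization_def _ Fact.out, factorization_prod fun i _ => factorial_ne_zero _,
      sum_apply', sum_comm]
    refine sum_congr rfl fun i hi => ?_
    rw [factorization_def _ Fact.out]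
    have hfi : f i ≤ ∑ i ∈ s, f i := single_le_sum (fun _ _ => zero_le _) hi
    exact padicValNat_factorial <| (log_mono_right hfi).trans_lt hb
  have hspec := congrArg (padicValNat p) (multinomial_spec s f)
  rw [padicValNat.mul (prod_ne_zero_iff.mpr fun i _ => factorial_ne_zero _)
    (multinomial_pos s f).ne', hprod, padicValNat_factorial hb] at hspec
  rw [sum_tsub_distrib _ fun j _ => sum_div_le_div_sum s f _]
  omega

theorem not_dvd_multinomial_iff {p : ℕ} [hp : Fact p.Prime] :
    ¬ p ∣ multinomial s f ↔ ∀ j, ∑ i ∈ s, f i % p ^ j < p ^ j := by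
  set N := ∑ i ∈ s, f i
  have hN : N < p ^ (log p N + 1) := lt_pow_succ_log_self hp.out.one_lt N
  rw [dvd_iff_padicValNat_ne_zero (multinomial_pos s f).ne', not_not,
    padicValNat_multinomial s f (lt_add_one _), sum_eq_zero_iff]
  simp only [mem_Ico, tsub_eq_zero_iff_le]
  refine ⟨fun h j => ?_, fun h j _ => ?_⟩
  · rcases Nat.lt_or_ge j (log p N + 1) with hj | hj
    · rcases j.eq_zero_or_pos with rfl | hj0
      · simp [mod_one]
      rw [← sum_div_eq_div_sum_iff s f (pow_pos hp.out.pos j)]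
      exact (sum_div_le_div_sum s f _).antisymm (h j ⟨hj0, hj⟩)
    · calc ∑ i ∈ s, f i % p ^ j ≤ N := sum_le_sum fun i _ => mod_le _ _
        _ < p ^ (log p N + 1) := hN
        _ ≤ p ^ j := pow_le_pow_right₀ hp.out.one_lt.le hj
  · exact ((sum_div_eq_div_sum_iff s f (pow_pos hp.out.pos j)).mpr (h j)).ge

theorem sum_mod_pow_succ (p j : ℕ) :
    ∑ i ∈ s, f i % p ^ (j + 1) = ∑ i ∈ s, f i % p ^ j + p ^ j * ∑ i ∈ s, f i / p ^ j % p := by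
  rw [mul_sum, ← sum_add_distrib]
  exact sum_congr rfl fun i _ => by rw [pow_succ, mod_mul]

theorem forall_sum_mod_pow_lt_iff (p : ℕ) :
    (∀ j, ∑ i ∈ s, f i % p ^ j < p ^ j) ↔ ∀ j, ∑ i ∈ s, f i / p ^ j % p < p := by
  refine ⟨fun h j => ?_, fun h j => ?_⟩
  · have hcarry := h (j + 1)
    rw [sum_mod_pow_succ, pow_succ] at hcarry
    exact Nat.lt_of_mul_lt_mul_left (a := p ^ j) (by omega)
  · induction j with
    | zero => simp [mod_one]
    | succ j ih =>
      calc ∑ i ∈ s, f i % p ^ (j + 1)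
          = ∑ i ∈ s, f i % p ^ j + p ^ j * ∑ i ∈ s, f i / p ^ j % p := sum_mod_pow_succ s f p j
        _ < p ^ j + p ^ j * ∑ i ∈ s, f i / p ^ j % p := by omega
        _ = p ^ j * (∑ i ∈ s, f i / p ^ j % p + 1) := by ring
        _ ≤ p ^ (j + 1) := by rw [pow_succ]; exact Nat.mul_le_mul_left _ (h j)

end Nat

/-- Lucas' theorem for multinomial coefficients: `p` does not divide the multinomial
coefficient `(k_1 + ⋯ + k_n)! / (k_1! ⋯ k_n!)` if and only if at every base-`p` digit
position `i`, the digits of `k_1, …, k_n` add without carrying. -/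
theorem stmt3 (p n : ℕ) (hp : p.Prime) (k : Fin n → ℕ) :
    ¬ p ∣ Nat.multinomial Finset.univ k ↔
      ∀ i : ℕ, ∑ j : Fin n, (k j / p ^ i) % p ≤ p - 1 := by
  have : Fact p.Prime := ⟨hp⟩
  simp only [Nat.le_sub_one_iff_lt hp.pos, Nat.not_dvd_multinomial_iff,
    Nat.forall_sum_mod_pow_lt_iff]
end

section
/- Let R = L[x_1,...,x_n] be a polynomial ring over a perfect field L of characteristic p > 0, I ⊆ R an ideal, and f ∈ R. Then f^(p^e) ∈ I^[p^e] if and only if f ∈ I, where I^[p^e] is the ideal generated by the p^e-th powers of elements of I. -/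
/-!
Over a perfect ring `L` of exponential characteristic `p`, with `q = p ^ e`, the additive map
`φ : ∑ c_γ X^γ ↦ ∑_u (c_{q • u})^{1/q} X^u` on `L[X]` is a splitting of the `q`-th power map:
`φ (g ^ q * h) = g * φ h` and `φ 1 = 1`. Hence `φ` maps the ideal generated by the `q`-th powers
of elements of `I` into `I`, while `φ (f ^ q) = f`.
-/

namespace MvPolynomial

variable {σ L : Type*} [CommSemiring L] (p : ℕ) [ExpChar L p] [PerfectRing L p] (e : ℕ)

noncomputable def iterateFrobeniusSplitting : MvPolynomial σ L →+ MvPolynomial σ L where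
  toFun f := .ofCoeff <|
    ((AddMonoidAlgebra.coeff f).comapDomain (p ^ e • ·)
      (smul_right_injective _ (expChar_pow_pos L p e).ne').injOn).mapRange
      (iterateFrobeniusEquiv L p e).symm (map_zero _)
  map_zero' := by ext; simp
  map_add' f g := by ext u; exact map_add (iterateFrobeniusEquiv L p e).symm (coeff _ f) (coeff _ g)

local notation "φ" => iterateFrobeniusSplitting (σ := σ) (L := L) p e

@[simp]
theorem coeff_iterateFrobeniusSplitting (f : MvPolynomial σ L) (u : σ →₀ ℕ) :
    coeff u (φ f) = (iterateFrobeniusEquiv L p e).symm (coeff (p ^ e • u) f) :=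
  rfl

theorem iterateFrobeniusSplitting_one : φ 1 = 1 := by
  classical
  ext u
  simp [coeff_one, eq_comm (a := (0 : σ →₀ ℕ)), (expChar_pos L p).ne']

theorem iterateFrobeniusSplitting_monomial_pow_mul (u : σ →₀ ℕ) (a : L) (h : MvPolynomial σ L) :
    φ (monomial u a ^ p ^ e * h) = monomial u a * φ h := by
  have hq : 0 < p ^ e := expChar_pow_pos L p e
  ext v
  have hle : p ^ e • u ≤ p ^ e • v ↔ u ≤ v := by
    simp [Finsupp.le_def, Nat.mul_le_mul_left_iff hq]
  have hsub : p ^ e • v - p ^ e • u = p ^ e • (v - u) := by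
    ext; simp [Nat.mul_sub]
  rw [monomial_pow, coeff_iterateFrobeniusSplitting, coeff_monomial_mul', coeff_monomial_mul',
    coeff_iterateFrobeniusSplitting]
  simp only [hle, hsub]
  split_ifs
  · rw [map_mul, ← iterateFrobeniusEquiv_def, RingEquiv.symm_apply_apply]
  · exact map_zero _

theorem iterateFrobeniusSplitting_pow_mul (g h : MvPolynomial σ L) :
    φ (g ^ p ^ e * h) = g * φ h := by
  induction g using MvPolynomial.induction_on' with
  | monomial u a => exact iterateFrobeniusSplitting_monomial_pow_mul p e u a h
  | add f g hf hg => rw [add_pow_expChar_pow, add_mul, map_add, hf, hg, add_mul]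

theorem iterateFrobeniusSplitting_pow (g : MvPolynomial σ L) : φ (g ^ p ^ e) = g := by
  rw [← mul_one (g ^ p ^ e), iterateFrobeniusSplitting_pow_mul, iterateFrobeniusSplitting_one,
    mul_one]

theorem iterateFrobeniusSplitting_mem_of_mem_span_pow {I : Ideal (MvPolynomial σ L)}
    {x : MvPolynomial σ L} (hx : x ∈ Ideal.span ((· ^ p ^ e) '' (I : Set (MvPolynomial σ L)))) :
    φ x ∈ I := by
  suffices ∀ r, φ (r * x) ∈ I by simpa using this 1
  induction hx using Submodule.span_induction with
  | mem _ hy =>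
    obtain ⟨g, hg, rfl⟩ := hy
    intro r
    rw [mul_comm, iterateFrobeniusSplitting_pow_mul]
    exact I.mul_mem_right _ hg
  | zero => simp
  | add y z _ _ hy hz => intro r; rw [mul_add, map_add]; exact I.add_mem (hy r) (hz r)
  | smul s y _ hy => intro r; rw [smul_eq_mul, ← mul_assoc]; exact hy (r * s)

end MvPolynomial

theorem stmt4_general (p n e : ℕ) (L : Type) [Field L]
    [ExpChar L p] [PerfectRing L p]
    (I : Ideal (MvPolynomial (Fin n) L)) (f : MvPolynomial (Fin n) L) :
    f ^ p ^ e ∈ Ideal.span ((fun g => g ^ p ^ e) '' (I : Set (MvPolynomial (Fin n) L)))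
      ↔ f ∈ I := by
  refine ⟨fun hf => ?_, fun hf => Ideal.subset_span ⟨f, hf, rfl⟩⟩
  rw [← MvPolynomial.iterateFrobeniusSplitting_pow p e f]
  exact MvPolynomial.iterateFrobeniusSplitting_mem_of_mem_span_pow p e hf

/-- Over `R = L[x_1,…,x_n]` with `L` a perfect field of characteristic `p > 0`,
`f^(p^e) ∈ I^[p^e]` iff `f ∈ I`, where `I^[p^e]` is the ideal generated by the
`p^e`-th powers of elements of `I`. -/
theorem stmt4 (p n e : ℕ) (hp : p.Prime) (L : Type) [Field L] [CharP L p]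
    [ExpChar L p] [PerfectRing L p]
    (I : Ideal (MvPolynomial (Fin n) L)) (f : MvPolynomial (Fin n) L) :
    f ^ p ^ e ∈ Ideal.span ((fun g => g ^ p ^ e) '' (I : Set (MvPolynomial (Fin n) L)))
      ↔ f ∈ I :=
  stmt4_general p n e L I f
end

section
/- Let p be a prime and d an integer with p > d > 2, and write p = dω + a with 1 ≤ a < d. Let δ^(2) denote the second digit of the non-terminating base-p expansion of 1/d. If a ≥ 2, then (d - 1)·δ^(2) ≥ p + 1. -/
/-!
The `n`-th digit of `1/d` in base `p` is `⌊p^n/d⌋ mod p`: the partial sum of the first `n` digits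
is `N/p^n` with `N ≡ A n (mod p)`, the remaining tail lies in `[0, 1/p^n]`, and `d ∤ p^n` rules out
both endpoints. Since `p² = d·ωp + ap`, the second digit is `m = ⌊ap/d⌋`. Writing `ap = dm + r`
with `r < d`, the claim becomes `d(p+1) ≤ (d-1)(ap-r)`, which follows from `p ≥ d + a` unless
`a = 2` and `d ≤ 4`; there `d = 4` would make `p` even and `d = 3` is checked directly.
-/

open Finset

lemma hasSum_digits_le_sum_range_add {b x : ℝ} (hb : 1 < b) {c : ℕ → ℝ} (hc : ∀ e, c e ≤ b - 1)
    (hx : HasSum (fun e => c e / b ^ (e + 1)) x) (n : ℕ) :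
    x ≤ ∑ e ∈ range n, c e / b ^ (e + 1) + 1 / b ^ n := by
  have hb0 : 0 < b := by linarith
  have hgeom : HasSum (fun e => (b - 1) / b ^ (e + n + 1)) (1 / b ^ n) := by
    have h := (hasSum_geometric_of_lt_one (inv_nonneg.2 hb0.le) (inv_lt_one_of_one_lt₀ hb)).mul_left
      ((b - 1) / b ^ (n + 1))
    have hterm : (fun e : ℕ => (b - 1) / b ^ (n + 1) * b⁻¹ ^ e) =
        fun e => (b - 1) / b ^ (e + n + 1) := by
      funext e
      rw [inv_pow, pow_add, pow_add]
      field_simp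
      ring
    have hsum : (b - 1) / b ^ (n + 1) * (1 - b⁻¹)⁻¹ = 1 / b ^ n := by
      rw [pow_succ]
      field_simp [(by linarith : b - 1 ≠ 0)]
    rwa [hterm, hsum] at h
  have htail := (hasSum_nat_add_iff' n).mpr hx
  have := hasSum_le (fun e => div_le_div_of_nonneg_right (hc (e + n)) (by positivity)) htail hgeom
  linarith

lemma exists_sum_range_succ_digits_eq {p : ℕ} (hp : p ≠ 0) (A : ℕ → ℕ) (n : ℕ) :
    ∃ k : ℕ, ∑ e ∈ range (n + 1), (A (e + 1) : ℝ) / (p : ℝ) ^ (e + 1) =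
      ((k * p + A (n + 1) : ℕ) : ℝ) / (p : ℝ) ^ (n + 1) := by
  induction n with
  | zero => exact ⟨0, by simp⟩
  | succ n ih =>
    obtain ⟨k, hk⟩ := ih
    refine ⟨k * p + A (n + 1), ?_⟩
    rw [sum_range_succ, hk]
    push_cast
    field_simp
    ring

lemma digit_eq_pow_div_mod {p d : ℕ} (hp : 1 < p) (hd : 0 < d) {A : ℕ → ℕ}
    (hA : ∀ e, A e ≤ p - 1)
    (hAsum : HasSum (fun e : ℕ => (A (e + 1) : ℝ) / (p : ℝ) ^ (e + 1)) (1 / (d : ℝ)))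
    {n : ℕ} (hdvd : ¬ d ∣ p ^ (n + 1)) :
    A (n + 1) = p ^ (n + 1) / d % p := by
  obtain ⟨k, hk⟩ := exists_sum_range_succ_digits_eq (by omega : p ≠ 0) A n
  set N := k * p + A (n + 1)
  have hpR : (1 : ℝ) < p := by exact_mod_cast hp
  have hdR : (0 : ℝ) < d := by exact_mod_cast hd
  have hlow : (N : ℝ) / p ^ (n + 1) ≤ 1 / d :=
    hk ▸ sum_le_hasSum (range (n + 1)) (fun e _ => by positivity) hAsum
  have hupp : 1 / (d : ℝ) ≤ (N + 1 : ℝ) / p ^ (n + 1) := by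
    have hdigit : ∀ e, (A (e + 1) : ℝ) ≤ p - 1 := fun e => by
      have : (A (e + 1) : ℝ) + 1 ≤ p := by exact_mod_cast (by have := hA (e + 1); omega)
      linarith
    have := hk ▸ hasSum_digits_le_sum_range_add hpR hdigit hAsum (n + 1)
    rwa [← add_div] at this
  have hlowN : d * N < p ^ (n + 1) := by
    refine lt_of_le_of_ne ?_ fun h => hdvd ⟨N, h.symm⟩
    rw [div_le_div_iff₀ (by positivity) hdR] at hlow
    exact_mod_cast (by linarith : (d : ℝ) * N ≤ p ^ (n + 1))
  have huppN : p ^ (n + 1) < d * (N + 1) := by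
    refine lt_of_le_of_ne ?_ fun h => hdvd ⟨N + 1, h⟩
    rw [div_le_div_iff₀ hdR (by positivity)] at hupp
    exact_mod_cast (by linarith : (p : ℝ) ^ (n + 1) ≤ d * (N + 1))
  have hAp : A (n + 1) < p := by have := hA (n + 1); omega
  rw [Nat.div_eq_of_lt_le (k := N) (by linarith [mul_comm N d]) (by linarith [mul_comm (N + 1) d]),
    Nat.mul_add_mod', Nat.mod_eq_of_lt hAp]

lemma sq_div_mod_eq_mul_div {p d ω a : ℕ} (hp : 0 < p) (had : a < d) (heq : p = d * ω + a) :
    p ^ 2 / d % p = a * p / d := by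
  have hsq : p ^ 2 = d * (ω * p) + a * p := by rw [sq]; nth_rewrite 1 [heq]; ring
  have hlt : a * p / d < p := Nat.div_lt_of_lt_mul (by nlinarith)
  rw [hsq, Nat.mul_add_div (by omega), Nat.mul_add_mod', Nat.mod_eq_of_lt hlt]

lemma add_one_le_pred_mul_div {a d p : ℕ} (ha : 2 ≤ a) (had : a < d) (hadp : d + a ≤ p)
    (hcase : 3 ≤ a ∨ 5 ≤ d) :
    p + 1 ≤ (d - 1) * (a * p / d) := by
  have hdm := Nat.div_add_mod (a * p) d
  have hr : a * p % d < d := Nat.mod_lt _ (by omega)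
  set m := a * p / d
  set r := a * p % d
  suffices h : d * (p + 1) ≤ d * ((d - 1) * m) from Nat.le_of_mul_le_mul_left h (by omega)
  zify [show 1 ≤ d by omega] at *
  -- `d(d-1)m = (d-1)(ap - r) ≥ (d-1)(ap - d + 1)`, and `p ≥ d + a` controls the rest.
  rcases hcase with ha3 | hd5
  · nlinarith [mul_nonneg (mul_nonneg (show (0:ℤ) ≤ a - 3 by omega) (show (0:ℤ) ≤ p by omega))
        (show (0:ℤ) ≤ d - 1 by omega),
      mul_nonneg (show (0:ℤ) ≤ p - d - 3 by omega) (show (0:ℤ) ≤ 2 * d - 3 by omega),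
      mul_nonneg (show (0:ℤ) ≤ d - 1 - r by omega) (show (0:ℤ) ≤ d - 1 by omega)]
  · nlinarith [mul_nonneg (mul_nonneg (show (0:ℤ) ≤ a - 2 by omega) (show (0:ℤ) ≤ p by omega))
        (show (0:ℤ) ≤ d - 1 by omega),
      mul_nonneg (show (0:ℤ) ≤ p - d - 2 by omega) (show (0:ℤ) ≤ d - 2 by omega),
      mul_nonneg (show (0:ℤ) ≤ d - 1 - r by omega) (show (0:ℤ) ≤ d - 1 by omega)]

theorem stmt9_general (p d ω a : ℕ) (hp : p.Prime) (hd : 2 < d) (hdp : d < p)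
    (hω : 1 ≤ ω) (ha2 : 2 ≤ a) (had : a < d) (heq : p = d * ω + a)
    (A : ℕ → ℕ) (hA : ∀ e, A e ≤ p - 1)
    (hAsum : HasSum (fun e : ℕ => (A (e + 1) : ℝ) / (p : ℝ) ^ (e + 1)) (1 / (d : ℝ))) :
    p + 1 ≤ (d - 1) * A 2 := by
  have hdvd : ¬ d ∣ p ^ 2 := by
    rw [Nat.dvd_prime_pow hp]
    rintro ⟨_ | i, -, rfl⟩
    · rw [pow_zero] at hd
      omega
    · exact hdp.not_ge (Nat.le_self_pow (Nat.succ_ne_zero i) p)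
  rw [digit_eq_pow_div_mod hp.one_lt (by omega) hA hAsum hdvd,
    sq_div_mod_eq_mul_div hp.pos had heq]
  by_cases hcase : 3 ≤ a ∨ 5 ≤ d
  · exact add_one_le_pred_mul_div ha2 had (by nlinarith) hcase
  · obtain ⟨ha3, hd5⟩ := not_or.mp hcase
    obtain rfl : a = 2 := by omega
    interval_cases d
    · omega
    · have := hp.eq_one_or_self_of_dvd 2 ⟨2 * ω + 1, by omega⟩
      omega

/-- Let `p` be prime with `p > d > 2`, `p = dω + a`, `2 ≤ a < d`. If `A 2` is the second
digit of the non-terminating base-`p` expansion of `1/d`, then `(d-1) * A 2 ≥ p + 1`. -/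
theorem stmt9 (p d ω a : ℕ) (hp : p.Prime) (hd : 2 < d) (hdp : d < p)
    (hω : 1 ≤ ω) (ha2 : 2 ≤ a) (had : a < d) (heq : p = d * ω + a)
    (A : ℕ → ℕ) (hA : ∀ e, A e ≤ p - 1)
    (hAsum : HasSum (fun e : ℕ => (A (e + 1) : ℝ) / (p : ℝ) ^ (e + 1)) (1 / (d : ℝ)))
    (hAnt : ∀ N, ∃ e ≥ N, A e ≠ 0) :
    p + 1 ≤ (d - 1) * A 2 :=
  stmt9_general p d ω a hp hd hdp hω ha2 had heq A hA hAsum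
end

section
/- Let p be a prime, d ≥ 2 not a power of p, and e ≥ 1. For any k = (k_1,...,k_d) ∈ ℕ^d and index i, there is at most one way to write the monomial x^(d·k) (in variables x_1,...,x_d) as x_i^(p^e) times an element μ of the set B_e of monomials with all exponents < p^e: precisely, if d·k - p^e·e_i and d·κ - p^e·c both have all entries in [0, p^e) with c ∈ ℕ^d, |κ| = |k|, and d·k - p^e·e_i = d·κ - p^e·c componentwise, then c = e_i and κ = k. -/
/-!
Summing the componentwise identity over all indices and using `|κ| = |k|` shows `|c| = 1`, so
`c` is a standard basis vector `e_j`. If `j ≠ i`, the `j`-th component reads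
`d · (κ_j - k_j) = p^e`, so `d` divides `p^e` and is a power of `p`; hence `j = i`, and then
`d · k = d · κ` gives `κ = k`.
-/

open Finset

lemma Nat.not_dvd_prime_pow_of_forall_ne_pow {p d : ℕ} (hp : p.Prime)
    (hd : ∀ m : ℕ, d ≠ p ^ m) (e : ℕ) : ¬ d ∣ p ^ e := fun hdvd ↦
  let ⟨m, _, hm⟩ := (Nat.dvd_prime_pow hp).mp hdvd
  hd m hm

section

variable {ι : Type*} [Fintype ι] [DecidableEq ι]

lemma eq_ite_of_sum_eq_one_of_forall_ne {c : ι → ℕ} (hc : ∑ j, c j = 1) (i : ι)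
    (hne : ∀ j ≠ i, c j ≠ 1) (j : ι) : c j = if j = i then 1 else 0 := by
  have hoff : ∀ j ≠ i, c j = 0 := fun j hj ↦ by
    have : c j ≤ 1 := hc ▸ single_le_sum (fun _ _ ↦ Nat.zero_le _) (mem_univ j)
    have := hne j hj
    omega
  split_ifs with hj
  · rw [hj, ← hc, sum_eq_single_of_mem i (mem_univ i) fun j _ ↦ hoff j]
  · exact hoff j hj

lemma sum_eq_one_of_mul_sub_ite_eq {d q : ℤ} (hq : q ≠ 0) {k κ c : ι → ℕ} {i : ι}
    (hsum : ∑ j, κ j = ∑ j, k j)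
    (h : ∀ j, d * k j - q * (if j = i then 1 else 0) = d * κ j - q * c j) :
    ∑ j, c j = 1 := by
  have htotal := sum_congr rfl fun j (_ : j ∈ univ) ↦ h j
  simp only [sum_sub_distrib, ← mul_sum, sum_ite_eq', mem_univ, if_true] at htotal
  have hsum' : ∑ j, (κ j : ℤ) = ∑ j, (k j : ℤ) := by exact_mod_cast hsum
  have : q * ∑ j, (c j : ℤ) = q * 1 := by rw [hsum'] at htotal; linarith
  exact_mod_cast mul_left_cancel₀ hq this

end

theorem stmt19_general (p d e : ℕ) (hp : p.Prime)
    (hnp : ∀ m : ℕ, d ≠ p ^ m)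
    (k κ c : Fin d → ℕ) (i : Fin d)
    (hsum : ∑ j, κ j = ∑ j, k j)
    (heqv : ∀ j, (d : ℤ) * k j - p ^ e * (if j = i then 1 else 0) =
      (d : ℤ) * κ j - p ^ e * c j) :
    (∀ j, c j = if j = i then 1 else 0) ∧ κ = k := by
  have hpe : (p : ℤ) ^ e ≠ 0 := pow_ne_zero e (by exact_mod_cast hp.ne_zero)
  have hc : ∀ j, c j = if j = i then 1 else 0 := by
    refine eq_ite_of_sum_eq_one_of_forall_ne (sum_eq_one_of_mul_sub_ite_eq hpe hsum heqv) i
      fun j hj hcj ↦ Nat.not_dvd_prime_pow_of_forall_ne_pow hp hnp e ?_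
    have := heqv j
    rw [if_neg hj, hcj] at this
    exact Int.natCast_dvd_natCast.mp ⟨κ j - k j, by push_cast at this ⊢; linarith⟩
  have hd : (d : ℤ) ≠ 0 := by exact_mod_cast i.pos.ne'
  refine ⟨hc, funext fun j ↦ ?_⟩
  have := heqv j
  rw [hc j, Nat.cast_ite, Nat.cast_one, Nat.cast_zero, sub_left_inj] at this
  exact_mod_cast (mul_left_cancel₀ hd this).symm

/-- Let `p` be prime, `d ≥ 2` not a power of `p`, `e ≥ 1`. If `k, κ, c ∈ ℕ^d`, `i` an
index, `|κ| = |k|`, the vectors `d·k - p^e·e_i` and `d·κ - p^e·c` both have all entries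
in `[0, p^e)` and are equal componentwise, then `c = e_i` and `κ = k`. -/
theorem stmt19 (p d e : ℕ) (hp : p.Prime) (hd : 2 ≤ d) (he : 1 ≤ e)
    (hnp : ∀ m : ℕ, d ≠ p ^ m)
    (k κ c : Fin d → ℕ) (i : Fin d)
    (hsum : ∑ j, κ j = ∑ j, k j)
    (hk : ∀ j, 0 ≤ (d : ℤ) * k j - p ^ e * (if j = i then 1 else 0) ∧
      (d : ℤ) * k j - p ^ e * (if j = i then 1 else 0) < (p : ℤ) ^ e)
    (hκ : ∀ j, 0 ≤ (d : ℤ) * κ j - p ^ e * c j ∧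
      (d : ℤ) * κ j - p ^ e * c j < (p : ℤ) ^ e)
    (heqv : ∀ j, (d : ℤ) * k j - p ^ e * (if j = i then 1 else 0) =
      (d : ℤ) * κ j - p ^ e * c j) :
    (∀ j, c j = if j = i then 1 else 0) ∧ κ = k :=
  stmt19_general p d e hp hnp k κ c i hsum heqv
end
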